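/- arXiv:1908.08226 — 3 statements merged into one kernel-verified Lean document; each statement's English description precedes it below -/
import Mathlib

section
/- Let G be a nontrivial finite group with trivial center such that for every non-identity element x of G, |C_G(x)| = 3 or |C_G(x)| = 4. Then G is isomorphic to A_4, the alternating group on 4 symbols. -/
/-!
In the class equation every nontrivial class has size `|G|/3` or `|G|/4`, so `|G|` divides
`12 (|G| - 1)`, hence `12`. Since the centralizer of an element `≠ 1` is a proper subgroup of
order `3` or `4`, and an involution (Cauchy) rules out `|G| = 6`, we get `|G| = 12`.
A Sylow `3`-subgroup `P` is then self-centralizing. It is not normal, as `G / C_G(P)` would embed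
in `Aut P` of order `2`; so there are four Sylow `3`-subgroups, each self-normalizing, and distinct
ones meet trivially. Hence `G` acts faithfully on them by conjugation, and its image in `S₄` has
index `2`, so it is `A₄`.
-/

open Subgroup

section

variable {G : Type*} [Group G]

theorem ConjClasses.nat_card_carrier_mul_card_centralizer (g : G) :
    Nat.card (ConjClasses.mk g).carrier * Nat.card (centralizer {g}) = Nat.card G := by
  rw [← ConjAct.orbit_eq_carrier_conjClasses,
    Nat.card_congr (MulAction.orbitEquivQuotientStabilizer (ConjAct G) g),
    nat_card_centralizer_nat_card_stabilizer, ← index, index_mul_card]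
  exact Nat.card_congr ConjAct.toConjAct.toEquiv.symm

theorem Group.card_dvd_of_forall_card_centralizer_dvd [Finite G] (hZ : center G = ⊥) {m : ℕ}
    (h : ∀ x : G, x ≠ 1 → Nat.card (centralizer {x}) ∣ m) : Nat.card G ∣ m := by
  have hclass := Group.nat_card_center_add_sum_card_noncenter_eq_card G
  rw [hZ, card_bot] at hclass
  have hsum : Nat.card G ∣ m * ∑ᶠ c ∈ ConjClasses.noncenter G, Nat.card c.carrier := by
    rw [mul_finsum_mem]
    refine finsum_mem_induction _ (dvd_zero _) (fun _ _ ↦ dvd_add) fun c hc ↦ ?_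
    obtain ⟨g, rfl⟩ := c.exists_rep
    have hg : g ≠ 1 := by
      rintro rfl
      exact ConjClasses.mk_bijOn G |>.mapsTo (one_mem _) hc
    rw [← ConjClasses.nat_card_carrier_mul_card_centralizer g, mul_comm m]
    exact mul_dvd_mul_left _ (h g hg)
  refine (Nat.dvd_add_left hsum).mp ?_
  rw [← mul_one_add, hclass]
  exact dvd_mul_left _ _

theorem Subgroup.card_centralizer_singleton_ne_card [Finite G] (hZ : center G = ⊥) {x : G}
    (hx : x ≠ 1) :
    Nat.card (centralizer {x}) ≠ Nat.card G := by
  rwa [Ne, card_eq_iff_eq_top, centralizer_eq_top_iff_subset, Set.singleton_subset_iff, hZ,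
    SetLike.mem_coe, mem_bot]

theorem card_eq_twelve_of_card_centralizer [Finite G] (hnt : ∃ x : G, x ≠ 1)
    (hZ : center G = ⊥)
    (h : ∀ x : G, x ≠ 1 →
      Nat.card (centralizer {x}) = 3 ∨ Nat.card (centralizer {x}) = 4) :
    Nat.card G = 12 := by
  have hdvd : Nat.card G ∣ 12 := Group.card_dvd_of_forall_card_centralizer_dvd hZ fun x hx ↦ by
    rcases h x hx with h3 | h4
    · exact h3 ▸ by norm_num
    · exact h4 ▸ by norm_num
  -- an involution, which exists by Cauchy, has centralizer of even order
  have hne6 : Nat.card G ≠ 6 := by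
    intro h6
    obtain ⟨x, hx⟩ := exists_prime_orderOf_dvd_card' (G := G) 2 (by omega)
    have hx1 : x ≠ 1 := by rintro rfl; simp at hx
    have h2 : 2 ∣ Nat.card (centralizer {x}) :=
      hx ▸ orderOf_dvd_natCard _ (mem_centralizer_singleton_iff.mpr rfl)
    have h6' : Nat.card (centralizer {x}) ∣ 6 := h6 ▸ card_subgroup_dvd_card _
    rcases h x hx1 with hC | hC <;> rw [hC] at h2 h6' <;> omega
  obtain ⟨x, hx⟩ := hnt
  have hCx : Nat.card (centralizer {x}) ∣ Nat.card G := card_subgroup_dvd_card _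
  have hCne := card_centralizer_singleton_ne_card hZ hx
  have hpos : 0 < Nat.card G := Nat.card_pos
  have hle : Nat.card G ≤ 12 := Nat.le_of_dvd (by norm_num) hdvd
  rcases h x hx with hC | hC <;> rw [hC] at hCx hCne <;> interval_cases Nat.card G <;> omega

theorem Subgroup.eq_zpowers_of_card_eq_prime {p : ℕ} [Fact p.Prime] {H : Subgroup G}
    (hH : Nat.card H = p) {g : G} (hg : g ∈ H) (hg1 : g ≠ 1) : H = zpowers g := by
  have hord : orderOf g = p :=
    ((Nat.dvd_prime Fact.out).mp (hH ▸ orderOf_dvd_natCard H hg)).resolve_left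
      (mt orderOf_eq_one_iff.mp hg1)
  have : Finite H := Nat.finite_of_card_ne_zero (hH ▸ (Fact.out : p.Prime).ne_zero)
  exact (eq_of_le_of_card_ge (zpowers_le.mpr hg) (by rw [Nat.card_zpowers, hord, hH])).symm

theorem Subgroup.centralizer_zpowers (x : G) :
    centralizer (zpowers x : Set G) = centralizer {x} := by
  rw [zpowers_eq_closure, centralizer_closure]

theorem Subgroup.index_centralizer_dvd_card_mulAut (H : Subgroup G) [H.Normal] :
    (centralizer (H : Set G)).index ∣ Nat.card (MulAut H) := by
  have hker : (MulAut.conjNormal : G →* MulAut H).ker = centralizer H := by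
    ext g
    simp only [MonoidHom.mem_ker, MulEquiv.ext_iff, MulAut.one_apply, Subtype.ext_iff,
      MulAut.conjNormal_apply, mem_centralizer_iff, Subtype.forall, SetLike.mem_coe,
      mul_inv_eq_iff_eq_mul]
    exact forall₂_congr fun _ _ ↦ eq_comm
  rw [← hker, index_ker]
  exact card_subgroup_dvd_card _

theorem Sylow.card_eq_of_card_eq_prime_mul [Finite G] {p m : ℕ} [Fact p.Prime]
    (hG : Nat.card G = p * m) (hm : ¬ p ∣ m) (P : Sylow p G) : Nat.card P = p := by
  have hm0 : m ≠ 0 := by rintro rfl; exact hm (dvd_zero p)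
  rw [P.card_eq_multiplicity, hG, Nat.factorization_mul (Fact.out : p.Prime).ne_zero hm0,
    Finsupp.add_apply, Nat.Prime.factorization_self Fact.out,
    Nat.factorization_eq_zero_of_not_dvd hm, pow_one]

theorem Sylow.index_eq_of_card_eq_prime_mul [Finite G] {p m : ℕ} [Fact p.Prime]
    (hG : Nat.card G = p * m) (hm : ¬ p ∣ m) (P : Sylow p G) : (P : Subgroup G).index = m := by
  have := (P : Subgroup G).card_mul_index
  rw [P.card_eq_of_card_eq_prime_mul hG hm, hG] at this
  exact Nat.eq_of_mul_eq_mul_left (Fact.out : p.Prime).pos this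

theorem Sylow.normalizer_eq_self_of_card_eq_index [Finite G] {p : ℕ} [Fact p.Prime]
    (P : Sylow p G) (h : Nat.card (Sylow p G) = (P : Subgroup G).index) :
    normalizer (P : Set G) = P := by
  have hle : (P : Subgroup G) ≤ normalizer (P : Set G) := le_normalizer
  refine le_antisymm ?_ hle
  have := relIndex_mul_index hle
  rw [← P.card_eq_index_normalizer, h] at this
  exact relIndex_eq_one.mp <| Nat.eq_of_mul_eq_mul_right
    (Nat.pos_of_ne_zero index_ne_zero_of_finite) (this.trans (one_mul _).symm)

theorem Sylow.toPermHom_injective {p : ℕ} [Fact p.Prime] [Nontrivial (Sylow p G)]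
    (hcard : ∀ P : Sylow p G, Nat.card P = p)
    (hN : ∀ P : Sylow p G, normalizer (P : Set G) = P) :
    Function.Injective (MulAction.toPermHom G (Sylow p G)) := by
  rw [← MonoidHom.ker_eq_bot_iff, eq_bot_iff]
  intro g hg
  by_contra hg1
  have hmem : ∀ P : Sylow p G, g ∈ P := fun P ↦
    (hN P).le (Sylow.smul_eq_iff_mem_normalizer.mp (congrArg (· P) (MonoidHom.mem_ker.mp hg)))
  obtain ⟨P, Q, hPQ⟩ := exists_pair_ne (Sylow p G)
  exact hPQ (Sylow.ext ((eq_zpowers_of_card_eq_prime (hcard P) (hmem P) hg1).trans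
    (eq_zpowers_of_card_eq_prime (hcard Q) (hmem Q) hg1).symm))

theorem Equiv.Perm.nonempty_mulEquiv_alternatingGroup_of_injective {α : Type*} [Fintype α]
    [DecidableEq α] {f : G →* Perm α} (hf : Function.Injective f)
    (hcard : 2 * Nat.card G = Nat.card (Perm α)) : Nonempty (G ≃* alternatingGroup α) := by
  have : Finite G := Finite.of_injective f hf
  have hrange : f.range.index = 2 := by
    have := f.range.index_mul_card
    rw [Nat.card_congr (MonoidHom.ofInjective hf).toEquiv.symm, ← hcard] at this
    exact Nat.eq_of_mul_eq_mul_right Nat.card_pos this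
  exact ⟨(MonoidHom.ofInjective hf).trans
    (MulEquiv.subgroupCongr (eq_alternatingGroup_of_index_eq_two hrange))⟩

theorem centralizer_eq_self_of_card_eq_three [Finite G] {H : Subgroup G} (hH : Nat.card H = 3)
    (h : ∀ x : G, x ≠ 1 →
      Nat.card (centralizer {x}) = 3 ∨ Nat.card (centralizer {x}) = 4) :
    centralizer (H : Set G) = H := by
  have : Nontrivial H := Finite.one_lt_card_iff_nontrivial.mp (by omega)
  obtain ⟨x, hxH, hx1⟩ := H.exists_ne_one_of_nontrivial
  have hHx := eq_zpowers_of_card_eq_prime hH hxH hx1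
  have hle : H ≤ centralizer {x} := hHx ▸ zpowers_le.mpr (mem_centralizer_singleton_iff.mpr rfl)
  have hC : Nat.card (centralizer {x}) = 3 := by
    have := hH ▸ card_dvd_of_le hle
    rcases h x hx1 with hC | hC <;> omega
  rw [hHx, centralizer_zpowers, ← hHx]
  exact (eq_of_le_of_card_ge hle (by rw [hC, hH])).symm

theorem card_sylow_three_eq_four [Finite G] (hG : Nat.card G = 12) (P : Sylow 3 G)
    (hP : centralizer (P : Subgroup G) = (P : Subgroup G)) : Nat.card (Sylow 3 G) = 4 := by
  have hindex := P.index_eq_of_card_eq_prime_mul (m := 4) hG (by norm_num)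
  -- a normal `P` would give `4 = |G : C_G(P)| ∣ |Aut P| = 2`
  have hne1 : Nat.card (Sylow 3 G) ≠ 1 := by
    intro h1
    have : Subsingleton (Sylow 3 G) := (Nat.card_eq_one_iff_unique.mp h1).1
    have : (P : Subgroup G).Normal := P.normal_of_subsingleton
    have hP3 := P.card_eq_of_card_eq_prime_mul (m := 4) hG (by norm_num)
    have : IsCyclic P := isCyclic_of_prime_card hP3
    have hdvd := (P : Subgroup G).index_centralizer_dvd_card_mulAut
    rw [hP, hindex, IsCyclic.card_mulAut, hP3] at hdvd
    exact absurd hdvd (by decide)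
  have hdvd := P.card_dvd_index
  have hmod : Nat.card (Sylow 3 G) % 3 = 1 := card_sylow_modEq_one 3 G
  rw [hindex] at hdvd
  have hle := Nat.le_of_dvd (by norm_num) hdvd
  interval_cases Nat.card (Sylow 3 G) <;> omega

theorem nonempty_mulEquiv_alternatingGroup_of_card_eq_twelve [Finite G] (hG : Nat.card G = 12)
    (P : Sylow 3 G) (hP : centralizer (P : Subgroup G) = (P : Subgroup G)) :
    Nonempty (G ≃* alternatingGroup (Fin 4)) := by
  have hn := card_sylow_three_eq_four hG P hP
  have hN (Q : Sylow 3 G) : normalizer (Q : Set G) = Q := Q.normalizer_eq_self_of_card_eq_index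
    (by rw [hn, Q.index_eq_of_card_eq_prime_mul (m := 4) hG (by norm_num)])
  have : Nontrivial (Sylow 3 G) := Finite.one_lt_card_iff_nontrivial.mp (by omega)
  let e := (Finite.equivFinOfCardEq hn).permCongrHom
  refine Equiv.Perm.nonempty_mulEquiv_alternatingGroup_of_injective
    (f := e.toMonoidHom.comp (MulAction.toPermHom G (Sylow 3 G)))
    (e.injective.comp (Sylow.toPermHom_injective
      (fun Q ↦ Q.card_eq_of_card_eq_prime_mul (m := 4) hG (by norm_num)) hN)) ?_
  rw [hG, Nat.card_perm, Nat.card_fin]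
  rfl

end

/-- A nontrivial finite group with trivial center in which every non-identity element
has centralizer of order `3` or `4` is isomorphic to the alternating group `A₄`. -/
theorem iso_alternating4_of_centralizers (G : Type*) [Group G] [Fintype G]
    (hnt : ∃ x : G, x ≠ 1) (hZ : Subgroup.center G = ⊥)
    (h : ∀ x : G, x ≠ 1 →
      Nat.card (Subgroup.centralizer ({x} : Set G)) = 3 ∨
      Nat.card (Subgroup.centralizer ({x} : Set G)) = 4) :
    Nonempty (G ≃* alternatingGroup (Fin 4)) := by
  have hG := card_eq_twelve_of_card_centralizer hnt hZ h
  obtain ⟨P⟩ : Nonempty (Sylow 3 G) := inferInstance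
  have hP : Nat.card P = 3 := P.card_eq_of_card_eq_prime_mul (m := 4) hG (by norm_num)
  exact nonempty_mulEquiv_alternatingGroup_of_card_eq_twelve hG P
    (centralizer_eq_self_of_card_eq_three hP h)
end

section
/- Let G be a finite non-abelian group with nontrivial center (|Z(G)| ≥ 2) such that |C_G(x)| < 3 + |Z(G)| for every noncentral element x (i.e., G is strong 2-star free). Then |C_G(x)| = 4 for every noncentral x in G. -/
namespace Subgroup

theorem two_mul_card_le_card_of_lt {G : Type*} [Group G] {H K : Subgroup G} [Finite K]
    (hHK : H < K) : 2 * Nat.card H ≤ Nat.card K := by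
  obtain ⟨k, hk⟩ := card_dvd_of_le hHK.le
  have hk0 : k ≠ 0 := by
    rintro rfl
    exact Nat.card_pos.ne' (by simpa using hk)
  have hk1 : k ≠ 1 := by
    rintro rfl
    exact hHK.ne (eq_of_le_of_card_ge hHK.le (by simp [hk]))
  rw [hk, mul_comm]
  exact Nat.mul_le_mul_left _ (by omega)

theorem center_lt_centralizer_singleton {G : Type*} [Group G] {x : G} (hx : x ∉ center G) :
    center G < centralizer {x} :=
  lt_of_le_of_ne (center_le_centralizer _) fun h ↦ hx (h ▸ mem_centralizer_singleton_iff.2 rfl)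

end Subgroup

theorem centralizer_eq_four_of_strong_two_star_free_general (G : Type*) [Group G] [Fintype G]
    (hZ : 2 ≤ Nat.card (Subgroup.center G))
    (h : ∀ x : G, x ∉ Subgroup.center G →
      Nat.card (Subgroup.centralizer ({x} : Set G)) <
        3 + Nat.card (Subgroup.center G)) :
    ∀ x : G, x ∉ Subgroup.center G →
      Nat.card (Subgroup.centralizer ({x} : Set G)) = 4 := by
  intro x hx
  have hlower := Subgroup.two_mul_card_le_card_of_lt (Subgroup.center_lt_centralizer_singleton hx)
  have hupper := h x hx
  -- `2|Z| ≤ |C(x)| < 3 + |Z|` forces `|Z| = 2`, and then `4 ≤ |C(x)| < 5`.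
  omega

/-- If a finite non-abelian group `G` has nontrivial center and is strong `2`-star free
(i.e. `|C_G(x)| < 3 + |Z(G)|` for every noncentral `x`), then every noncentral element
has centralizer of order `4`. -/
theorem centralizer_eq_four_of_strong_two_star_free (G : Type*) [Group G] [Fintype G]
    (hna : ¬ ∀ a b : G, a * b = b * a)
    (hZ : 2 ≤ Nat.card (Subgroup.center G))
    (h : ∀ x : G, x ∉ Subgroup.center G →
      Nat.card (Subgroup.centralizer ({x} : Set G)) <
        3 + Nat.card (Subgroup.center G)) :
    ∀ x : G, x ∉ Subgroup.center G →
      Nat.card (Subgroup.centralizer ({x} : Set G)) = 4 :=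
  centralizer_eq_four_of_strong_two_star_free_general G hZ h
end

section
/- Let n be an even natural number with n ≥ 4 and let G = D_{2n} be the dihedral group of order 2n. Then for every natural number k, G is strong k-star free (i.e., |C_G(x)| < (k+1) + |Z(G)| for all noncentral x in G) if and only if k ≥ n - 2. Equivalently, the strong star number of D_{2n} is S(D_{2n}) = n - 2. -/
/-!
A centralizer of a noncentral element is a proper subgroup of `D_{2n}`, so its order is at most
`n`; the order `n` is attained by the rotation `r 1`, whose centralizer contains all rotations.
For even `n ≥ 4` the centre is `{1, r (n/2)}`, of order `2`.
-/

theorem ZMod.add_self_eq_zero_iff_of_eq_add_self {n m : ℕ} [NeZero n] (hnm : n = m + m)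
    {i : ZMod n} : i + i = 0 ↔ i = 0 ∨ i = m := by
  constructor
  · intro h
    obtain ⟨c, hc⟩ : n ∣ i.val + i.val := by
      rw [← ZMod.natCast_eq_zero_iff, Nat.cast_add, ZMod.natCast_zmod_val, h]
    have hlt := i.val_lt
    rw [← ZMod.natCast_zmod_val i]
    obtain rfl | rfl : c = 0 ∨ c = 1 := by
      have : c < 2 := by nlinarith
      omega
    · left; rw [show i.val = 0 by omega, Nat.cast_zero]
    · right; rw [show i.val = m by omega]
  · rintro (rfl | rfl)
    · exact add_zero 0
    · rw [← Nat.cast_add, ← hnm, ZMod.natCast_self]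

theorem ZMod.two_ne_zero_of_two_lt {n : ℕ} (hn : 2 < n) : (2 : ZMod n) ≠ 0 := by
  rw [← Nat.cast_ofNat, Ne, ZMod.natCast_eq_zero_iff]
  exact fun h => absurd (Nat.le_of_dvd two_pos h) (by omega)

open DihedralGroup Subgroup

section StrongStarFree

variable (G : Type*) [Group G]

def IsStrongStarFree (k : ℕ) : Prop :=
  ∀ x : G, x ∉ center G → Nat.card (centralizer ({x} : Set G)) < (k + 1) + Nat.card (center G)

variable {G}

theorem Subgroup.two_mul_card_le_of_ne_top [Finite G] {H : Subgroup G} (hH : H ≠ ⊤) :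
    2 * Nat.card H ≤ Nat.card G := by
  rw [← H.card_mul_index, mul_comm]
  exact Nat.mul_le_mul_left _ (one_lt_index_of_ne_top hH)

theorem Subgroup.centralizer_singleton_ne_top {x : G} (hx : x ∉ center G) :
    centralizer ({x} : Set G) ≠ ⊤ := by
  rwa [Ne, centralizer_eq_top_iff_subset, Set.singleton_subset_iff]

theorem isStrongStarFree_iff_of_max_card_centralizer {c : ℕ}
    (hle : ∀ x ∉ center G, Nat.card (centralizer ({x} : Set G)) ≤ c)
    {x₀ : G} (hx₀ : x₀ ∉ center G) (hx₀c : c ≤ Nat.card (centralizer ({x₀} : Set G))) (k : ℕ) :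
    IsStrongStarFree G k ↔ c < k + 1 + Nat.card (center G) :=
  ⟨fun h => hx₀c.trans_lt (h x₀ hx₀), fun h x hx => (hle x hx).trans_lt h⟩

end StrongStarFree

namespace DihedralGroup

variable {n : ℕ}

theorem r_mem_center_iff {i : ZMod n} : r i ∈ center (DihedralGroup n) ↔ i + i = 0 := by
  rw [mem_center_iff]
  constructor
  · intro h
    have := sr.inj (h (sr 0))
    rw [zero_add, zero_sub] at this
    rwa [← neg_eq_iff_add_eq_zero, eq_comm]
  · rintro h (j | j)
    · rw [r_mul_r, r_mul_r, add_comm]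
    · rw [r_mul_sr, sr_mul_r, sub_eq_add_neg, neg_eq_of_add_eq_zero_right h]

theorem sr_notMem_center (hn : 2 < n) (i : ZMod n) : sr i ∉ center (DihedralGroup n) := by
  rw [mem_center_iff]
  intro h
  have := sr.inj (h (r 1))
  exact ZMod.two_ne_zero_of_two_lt hn (by linear_combination -this)

theorem r_one_notMem_center (hn : 2 < n) : r 1 ∉ center (DihedralGroup n) := by
  rw [r_mem_center_iff, one_add_one_eq_two]
  exact ZMod.two_ne_zero_of_two_lt hn

theorem card_centralizer_le_of_notMem_center [NeZero n] {x : DihedralGroup n}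
    (hx : x ∉ center (DihedralGroup n)) :
    Nat.card (centralizer ({x} : Set (DihedralGroup n))) ≤ n := by
  have := two_mul_card_le_of_ne_top (centralizer_singleton_ne_top hx)
  rw [nat_card] at this
  omega

theorem card_rotations_le_card_centralizer [NeZero n] (i : ZMod n) :
    n ≤ Nat.card (centralizer ({r i} : Set (DihedralGroup n))) := by
  refine (Nat.card_zmod n).symm.trans_le <|
    Nat.card_le_card_of_injective (fun j => ⟨r j, ?_⟩) fun _ _ h => r.inj (congrArg Subtype.val h)
  rw [mem_centralizer_singleton_iff, r_mul_r, r_mul_r, add_comm]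

theorem center_eq_of_eq_add_self {m : ℕ} (hn : 2 < n) (hnm : n = m + m) :
    (center (DihedralGroup n) : Set (DihedralGroup n)) = {1, r m} := by
  have : NeZero n := .of_pos (by omega)
  ext (i | i)
  · simp only [SetLike.mem_coe, r_mem_center_iff, ZMod.add_self_eq_zero_iff_of_eq_add_self hnm,
      one_def, Set.mem_insert_iff, Set.mem_singleton_iff, r.injEq]
  · simp only [SetLike.mem_coe, Set.mem_insert_iff, Set.mem_singleton_iff, one_def,
      reduceCtorEq, or_self, iff_false]
    exact sr_notMem_center hn i

theorem card_center_of_even (hn : 2 < n) (heven : Even n) :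
    Nat.card (center (DihedralGroup n)) = 2 := by
  obtain ⟨m, hnm⟩ := heven
  have hm : (m : ZMod n) ≠ 0 := by
    rw [Ne, ZMod.natCast_eq_zero_iff]
    exact fun h => absurd (Nat.le_of_dvd (by omega) h) (by omega)
  have h1 : (1 : DihedralGroup n) ≠ r m := by
    rw [one_def, Ne, r.injEq]
    exact hm.symm
  show Nat.card (center (DihedralGroup n) : Set (DihedralGroup n)) = 2
  rw [center_eq_of_eq_add_self hn hnm, Nat.card_coe_set_eq, Set.ncard_pair h1]

end DihedralGroup

/-- For even `n ≥ 4`, the dihedral group `D_{2n}` is strong `k`-star free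
(i.e. `|C_G(x)| < (k+1) + |Z(G)|` for all noncentral `x`) iff `k ≥ n - 2`;
equivalently, its strong star number is `n - 2`. -/
theorem dihedral_even_strong_star_free (n : ℕ) (hn : 4 ≤ n) (heven : Even n) :
    (∀ k : ℕ,
      (∀ x : DihedralGroup n, x ∉ Subgroup.center (DihedralGroup n) →
        Nat.card (Subgroup.centralizer ({x} : Set (DihedralGroup n))) <
          (k + 1) + Nat.card (Subgroup.center (DihedralGroup n))) ↔ n - 2 ≤ k) ∧
    sInf {k : ℕ | ∀ x : DihedralGroup n, x ∉ Subgroup.center (DihedralGroup n) →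
        Nat.card (Subgroup.centralizer ({x} : Set (DihedralGroup n))) <
          (k + 1) + Nat.card (Subgroup.center (DihedralGroup n))} = n - 2 := by
  have : NeZero n := .of_pos (by omega)
  have key (k : ℕ) : IsStrongStarFree (DihedralGroup n) k ↔ n - 2 ≤ k := by
    rw [isStrongStarFree_iff_of_max_card_centralizer (fun _ => card_centralizer_le_of_notMem_center)
      (r_one_notMem_center (by omega)) (card_rotations_le_card_centralizer 1),
      card_center_of_even (by omega) heven]
    omega
  refine ⟨key, ?_⟩
  change sInf {k | IsStrongStarFree (DihedralGroup n) k} = n - 2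
  rw [show {k | IsStrongStarFree (DihedralGroup n) k} = Set.Ici (n - 2) from Set.ext key, csInf_Ici]
end
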